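/- (Correctness of the depth-two collaborative two-erasure repair scheme, full-length case.) Let B = GF(q) with q = p^m, F = GF(q^t), and Tr the trace from F to B, and let k ≤ |F| - q^{t-1} (no divisibility condition on t is required). Let α*, ᾱ ∈ F be distinct. Then there exists a nonzero element τ ∈ F, depending only on α* and ᾱ (and a choice of bases of K_{α*,ᾱ} over B), such that: if f, g ∈ F[X] both have degree less than k, and for every α ∈ F \ {α*, ᾱ} both Tr(τ·f(α)·(α-α*)^{-1}) = Tr(τ·g(α)·(α-α*)^{-1}) and Tr(f(α)·(α-ᾱ)^{-1}) = Tr(g(α)·(α-ᾱ)^{-1}) hold, then f(α*) = g(α*) and f(ᾱ) = g(ᾱ). -/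

import Mathlib

open Polynomial Finset

/-!
Write `q = p ^ m` and `Tr x = ∑_{i < t} x ^ (q ^ i)`. As `q` is a power of the characteristic, `Tr`
is additive, takes values in the fixed field of `x ↦ x ^ q` and is linear over it. It is nonzero,
being a polynomial of degree `q ^ (t - 1) < |F|`, and for `t ≥ 2` it kills some `τ ≠ 0`, since its
image lies among the at most `q < |F|` roots of `X ^ q - X`.

If `deg P < k ≤ |F| - q ^ (t - 1)`, then `P(X) · Tr(z (X - β)) / (X - β)` has degree `< |F| - 1`,
so its values over `F` sum to zero. Applying `Tr` and letting `z` vary shows: if the traces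
`Tr (P(α) / (α - β))` vanish for all `α ∉ {β, γ}`, then `P(β) = Tr (P(γ) / (γ - β)) · (β - γ)`.
For `P = f - g` this gives `P(ᾱ) = s (ᾱ - α*)` with `s` in the fixed field, and then, for `τ P`,
`τ P(α*) = Tr (s τ) (α* - ᾱ) = s Tr(τ) (α* - ᾱ) = 0`; hence `P(α*) = 0`, `s = 0` and `P(ᾱ) = 0`.
-/

theorem FiniteField.sum_eval_eq_zero_of_natDegree_lt {K : Type*} [Field K] [Fintype K] (P : K[X])
    (hP : P.natDegree < Fintype.card K - 1) : ∑ x : K, P.eval x = 0 := by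
  simp_rw [eval_eq_sum_range' hP]
  rw [sum_comm]
  refine sum_eq_zero fun i hi => ?_
  rw [← mul_sum, FiniteField.sum_pow_lt_card_sub_one K i (mem_range.1 hi), mul_zero]

theorem Fintype.one_lt_and_ne_zero_of_card_eq_pow {α : Type*} [Fintype α] [Nontrivial α] {q t : ℕ}
    (h : Fintype.card α = q ^ t) : 1 < q ∧ t ≠ 0 := by
  have h1 : 1 < q ^ t := h ▸ Fintype.one_lt_card
  have ht : t ≠ 0 := by rintro rfl; simp at h1
  exact ⟨(Nat.one_lt_pow_iff ht).1 h1, ht⟩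

section

variable {F : Type*} [Field F] (p m t : ℕ)

/-- The polynomial `Tr (z X) / X` (see `eval_repairPolynomial_mul`) of the Guruswami–Wootters
repair scheme. -/
noncomputable def repairPolynomial (z : F) : F[X] :=
  ∑ i ∈ range t, C (z ^ (p ^ m) ^ i) * X ^ ((p ^ m) ^ i - 1)

variable {p m t}

theorem repairPolynomial_eval_zero (hq : 1 < p ^ m) (ht : t ≠ 0) (z : F) :
    (repairPolynomial p m t z).eval 0 = z := by
  simp only [repairPolynomial, eval_finsetSum, eval_mul, eval_C, eval_pow, eval_X]
  rw [sum_eq_single_of_mem 0 (mem_range.2 (Nat.pos_of_ne_zero ht))]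
  · simp
  · intro i _ hi
    rw [zero_pow (Nat.sub_ne_zero_of_lt (Nat.one_lt_pow hi hq)), mul_zero]

variable (p m t) [ExpChar F p]

/-- For `Fintype.card F = (p ^ m) ^ t` this is the field trace from `F` to its subfield of order
`p ^ m`. -/
def frobeniusTrace : F →+ F where
  toFun x := ∑ i ∈ range t, x ^ (p ^ m) ^ i
  map_zero' := sum_eq_zero fun i _ => zero_pow (pow_ne_zero _ (expChar_pow_pos F p m).ne')
  map_add' x y := by simp only [← pow_mul, add_pow_expChar_pow, sum_add_distrib]

variable {p m t}

local notation "Tr" => frobeniusTrace p m t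

theorem frobeniusTrace_apply (x : F) : Tr x = ∑ i ∈ range t, x ^ (p ^ m) ^ i :=
  rfl

theorem frobeniusTrace_mul_of_pow_eq {s : F} (hs : s ^ p ^ m = s) (x : F) :
    Tr (s * x) = s * Tr x := by
  have hsi : ∀ i : ℕ, s ^ (p ^ m) ^ i = s := by
    intro i
    induction i with
    | zero => simp
    | succ i ih => rw [pow_succ, pow_mul, ih, hs]
  simp only [frobeniusTrace_apply, mul_sum, mul_pow, hsi]

theorem frobeniusTrace_pow [Fintype F] (hF : Fintype.card F = (p ^ m) ^ t) (x : F) :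
    Tr x ^ p ^ m = Tr x := by
  have hx : x ^ (p ^ m) ^ t = x ^ (p ^ m) ^ 0 := by rw [← hF, FiniteField.pow_card, pow_zero, pow_one]
  have hshift := sum_range_succ' (fun i => x ^ (p ^ m) ^ i) t
  rw [sum_range_succ, hx, add_left_inj] at hshift
  rw [frobeniusTrace_apply, sum_pow_char_pow, hshift]
  exact sum_congr rfl fun i _ => by rw [← pow_mul, pow_succ]

theorem natDegree_repairPolynomial_le (z : F) :
    (repairPolynomial p m t z).natDegree ≤ (p ^ m) ^ (t - 1) - 1 := by
  refine natDegree_sum_le_of_forall_le _ _ fun i hi => (natDegree_C_mul_X_pow_le _ _).trans ?_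
  have := mem_range.1 hi
  exact Nat.sub_le_sub_right (Nat.pow_le_pow_right (expChar_pow_pos F p m) (by omega)) 1

theorem eval_repairPolynomial_mul (z a : F) :
    (repairPolynomial p m t z).eval a * a = Tr (z * a) := by
  simp only [repairPolynomial, eval_finsetSum, eval_mul, eval_C, eval_pow, eval_X, sum_mul,
    frobeniusTrace_apply, mul_pow, mul_assoc]
  exact sum_congr rfl fun i _ => by rw [pow_sub_one_mul (pow_ne_zero i (expChar_pow_pos F p m).ne')]

theorem exists_frobeniusTrace_ne_zero [Fintype F] (hF : Fintype.card F = (p ^ m) ^ t) :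
    ∃ y : F, Tr y ≠ 0 := by
  obtain ⟨hq, ht⟩ := Fintype.one_lt_and_ne_zero_of_card_eq_pow hF
  have h0 := repairPolynomial_eval_zero hq ht (1 : F)
  have hR : repairPolynomial p m t (1 : F) * X ≠ 0 :=
    mul_ne_zero (fun h => by simp [h] at h0) X_ne_zero
  have hdeg : (repairPolynomial p m t (1 : F) * X).natDegree < Fintype.card F := by
    have hle := natDegree_repairPolynomial_le (p := p) (m := m) (t := t) (1 : F)
    have hlt : (p ^ m) ^ (t - 1) < (p ^ m) ^ t := Nat.pow_lt_pow_right hq (by omega)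
    have hpos : 0 < (p ^ m) ^ (t - 1) := by positivity
    rw [natDegree_mul_X (fun h => hR (by rw [h, zero_mul])), hF]
    omega
  by_contra! h
  exact hR (eq_zero_of_natDegree_lt_card_of_eval_eq_zero _ Function.injective_id
    (fun y => by rw [eval_mul, eval_X, eval_repairPolynomial_mul, one_mul, h]) hdeg)

theorem eq_zero_of_forall_frobeniusTrace_mul_eq_zero [Fintype F]
    (hF : Fintype.card F = (p ^ m) ^ t) {w : F} (hw : ∀ z, Tr (z * w) = 0) :
    w = 0 := by
  obtain ⟨y, hy⟩ := exists_frobeniusTrace_ne_zero (F := F) hF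
  by_contra hw0
  exact hy (by simpa [hw0] using hw (y * w⁻¹))

theorem exists_ne_zero_frobeniusTrace_eq_zero [Fintype F]
    (hF : Fintype.card F = (p ^ m) ^ t) (ht : 2 ≤ t) :
    ∃ τ : F, τ ≠ 0 ∧ Tr τ = 0 := by
  classical
  obtain ⟨hq, -⟩ := Fintype.one_lt_and_ne_zero_of_card_eq_pow hF
  have himage : #(univ.image (frobeniusTrace (F := F) p m t)) ≤ p ^ m := by
    rw [← FiniteField.X_pow_card_sub_X_natDegree_eq F hq]
    refine card_le_degree_of_subset_roots fun y hy => ?_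
    obtain ⟨x, -, rfl⟩ := mem_image.1 hy
    rw [mem_roots (FiniteField.X_pow_card_sub_X_ne_zero F hq), IsRoot, eval_sub, eval_pow, eval_X,
      frobeniusTrace_pow hF, sub_self]
  have hnot : ¬Function.Injective Tr := fun hinj => by
    rw [card_image_of_injective _ hinj, card_univ, hF] at himage
    exact himage.not_gt (by simpa using Nat.pow_lt_pow_right hq ht)
  rw [injective_iff_map_eq_zero] at hnot
  push Not at hnot
  obtain ⟨τ, hτ, hτ0⟩ := hnot
  exact ⟨τ, hτ0, hτ⟩

theorem sum_eval_mul_repairPolynomial_eq_zero [Fintype F] (hF : Fintype.card F = (p ^ m) ^ t)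
    {k : ℕ} (hk : k ≤ Fintype.card F - (p ^ m) ^ (t - 1)) {P : F[X]} (hP : P.degree < k)
    (β z : F) : ∑ α : F, P.eval α * (repairPolynomial p m t z).eval (α - β) = 0 := by
  obtain ⟨hq, ht⟩ := Fintype.one_lt_and_ne_zero_of_card_eq_pow hF
  rcases eq_or_ne P 0 with rfl | hP0
  · simp
  have hPk : P.natDegree < k := (natDegree_lt_iff_degree_lt hP0).2 hP
  have hR := natDegree_repairPolynomial_le (p := p) (m := m) (t := t) z
  have hlt : (p ^ m) ^ (t - 1) ≤ Fintype.card F :=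
    hF ▸ Nat.pow_le_pow_right (by omega) (Nat.sub_le t 1)
  have hpos : 0 < (p ^ m) ^ (t - 1) := by positivity
  have hdeg : (P * (repairPolynomial p m t z).comp (X - C β)).natDegree < Fintype.card F - 1 := by
    refine natDegree_mul_le.trans_lt ?_
    rw [natDegree_comp, natDegree_X_sub_C, mul_one]
    omega
  simpa using FiniteField.sum_eval_eq_zero_of_natDegree_lt _ hdeg

theorem eval_eq_frobeniusTrace_mul_of_frobeniusTrace_eq_zero [Fintype F]
    (hF : Fintype.card F = (p ^ m) ^ t) {k : ℕ} (hk : k ≤ Fintype.card F - (p ^ m) ^ (t - 1))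
    {P : F[X]} (hP : P.degree < k) {β γ : F} (hβγ : β ≠ γ)
    (hvan : ∀ α, α ≠ β → α ≠ γ → Tr (P.eval α * (α - β)⁻¹) = 0) :
    P.eval β = Tr (P.eval γ * (γ - β)⁻¹) * (β - γ) := by
  obtain ⟨hq, ht⟩ := Fintype.one_lt_and_ne_zero_of_card_eq_pow hF
  have hterm : ∀ z α, α ≠ β → Tr (P.eval α * (repairPolynomial p m t z).eval (α - β)) =
      Tr (z * (α - β)) * Tr (P.eval α * (α - β)⁻¹) := by
    intro z α hα
    have hR : (repairPolynomial p m t z).eval (α - β) = Tr (z * (α - β)) * (α - β)⁻¹ := by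
      rw [← eval_repairPolynomial_mul, mul_inv_cancel_right₀ (sub_ne_zero.2 hα)]
    rw [hR, mul_left_comm, frobeniusTrace_mul_of_pow_eq (frobeniusTrace_pow hF _)]
  rw [← sub_eq_zero, ← neg_sub γ β, mul_neg, sub_neg_eq_add]
  refine eq_zero_of_forall_frobeniusTrace_mul_eq_zero hF fun z => ?_
  have hsum := congrArg Tr (sum_eval_mul_repairPolynomial_eq_zero hF hk hP β z)
  rw [map_sum, map_zero, Fintype.sum_eq_add β γ hβγ fun α hα => by
    rw [hterm z α hα.1, hvan α hα.1 hα.2, mul_zero], hterm z γ hβγ.symm, sub_self,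
    repairPolynomial_eval_zero hq ht, mul_comm (P.eval β)] at hsum
  rw [mul_add, map_add, mul_left_comm, frobeniusTrace_mul_of_pow_eq (frobeniusTrace_pow hF _)]
  linear_combination hsum

theorem eval_eq_zero_of_frobeniusTrace_eq_zero [Fintype F] (hF : Fintype.card F = (p ^ m) ^ t)
    {k : ℕ} (hk : k ≤ Fintype.card F - (p ^ m) ^ (t - 1)) {P : F[X]} (hP : P.degree < k)
    {αs αb τ : F} (hne : αs ≠ αb) (hτ0 : τ ≠ 0) (hτ : Tr τ = 0)
    (hs : ∀ α, α ≠ αs → α ≠ αb → Tr (τ * P.eval α * (α - αs)⁻¹) = 0)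
    (hb : ∀ α, α ≠ αs → α ≠ αb → Tr (P.eval α * (α - αb)⁻¹) = 0) :
    P.eval αs = 0 ∧ P.eval αb = 0 := by
  have hPb := eval_eq_frobeniusTrace_mul_of_frobeniusTrace_eq_zero hF hk hP hne.symm
    fun α hαb hαs => hb α hαs hαb
  have hPs := eval_eq_frobeniusTrace_mul_of_frobeniusTrace_eq_zero hF hk
    ((degree_C_mul hτ0).trans_lt hP) hne fun α hαs hαb => by
      simpa only [eval_mul, eval_C] using hs α hαs hαb
  set s := Tr (P.eval αs * (αs - αb)⁻¹) with hs_def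
  have hτs : τ * P.eval αb * (αb - αs)⁻¹ = s * τ := by
    rw [hPb]
    field_simp [sub_ne_zero.2 hne.symm]
  rw [eval_mul, eval_C, eval_mul, eval_C, hτs, frobeniusTrace_mul_of_pow_eq (frobeniusTrace_pow hF _),
    hτ, mul_zero, zero_mul, mul_eq_zero, or_iff_right hτ0] at hPs
  refine ⟨hPs, ?_⟩
  rw [hPb, hs_def, hPs, zero_mul, map_zero, zero_mul]

end

theorem depth_two_two_erasure_repair_general (p m t k : ℕ) (hp : p.Prime)
    (ht : 2 ≤ t)
    (F : Type*) [Field F] [Fintype F] (hF : Fintype.card F = (p ^ m) ^ t)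
    (hk : k ≤ Fintype.card F - (p ^ m) ^ (t - 1))
    (αs αb : F) (hne : αs ≠ αb) :
    ∃ τ : F, τ ≠ 0 ∧
      ∀ f g : F[X], f.degree < (k : WithBot ℕ) → g.degree < (k : WithBot ℕ) →
        (∀ α : F, α ≠ αs → α ≠ αb →
          ∑ i ∈ Finset.range t, (τ * f.eval α * (α - αs)⁻¹) ^ ((p ^ m) ^ i) =
            ∑ i ∈ Finset.range t, (τ * g.eval α * (α - αs)⁻¹) ^ ((p ^ m) ^ i)) →
        (∀ α : F, α ≠ αs → α ≠ αb →
          ∑ i ∈ Finset.range t, (f.eval α * (α - αb)⁻¹) ^ ((p ^ m) ^ i) =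
            ∑ i ∈ Finset.range t, (g.eval α * (α - αb)⁻¹) ^ ((p ^ m) ^ i)) →
        f.eval αs = g.eval αs ∧ f.eval αb = g.eval αb := by
  have : Fact p.Prime := ⟨hp⟩
  have : CharP F p := charP_of_card_eq_prime_pow (hF.trans (pow_mul p m t).symm)
  obtain ⟨τ, hτ0, hτ⟩ := exists_ne_zero_frobeniusTrace_eq_zero hF ht
  refine ⟨τ, hτ0, fun f g hf hg H1 H2 => ?_⟩
  have hdeg : (f - g).degree < k := (degree_sub_le f g).trans_lt (max_lt hf hg)
  simpa only [eval_sub, sub_eq_zero] using eval_eq_zero_of_frobeniusTrace_eq_zero hF hk hdeg hne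
    hτ0 hτ (fun α hαs hαb => by
      rw [eval_sub, mul_sub, sub_mul, map_sub, sub_eq_zero]; exact H1 α hαs hαb)
    (fun α hαs hαb => by rw [eval_sub, sub_mul, map_sub, sub_eq_zero]; exact H2 α hαs hαb)

/-- Correctness of the depth-two collaborative two-erasure repair scheme
(full-length case): for `k ≤ |F| - q^{t-1}` and any two distinct evaluation points
`α*, ᾱ ∈ F` there is a nonzero multiplier `τ ∈ F`, depending only on `α*` and `ᾱ`,
such that the two erased symbols `f(α*)`, `f(ᾱ)` of a codeword of `RS(F,k)` are
jointly determined by the repair traces `Tr(τ·f(α)·(α-α*)⁻¹)` and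
`Tr(f(α)·(α-ᾱ)⁻¹)`, `α ∈ F \ {α*, ᾱ}`. No divisibility condition on `t` is needed. -/
theorem depth_two_two_erasure_repair (p m t k : ℕ) (hp : p.Prime)
    (hm : 1 ≤ m) (ht : 2 ≤ t)
    (F : Type*) [Field F] [Fintype F] (hF : Fintype.card F = (p ^ m) ^ t)
    (hk : k ≤ Fintype.card F - (p ^ m) ^ (t - 1))
    (αs αb : F) (hne : αs ≠ αb) :
    ∃ τ : F, τ ≠ 0 ∧
      ∀ f g : F[X], f.degree < (k : WithBot ℕ) → g.degree < (k : WithBot ℕ) →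
        (∀ α : F, α ≠ αs → α ≠ αb →
          ∑ i ∈ Finset.range t, (τ * f.eval α * (α - αs)⁻¹) ^ ((p ^ m) ^ i) =
            ∑ i ∈ Finset.range t, (τ * g.eval α * (α - αs)⁻¹) ^ ((p ^ m) ^ i)) →
        (∀ α : F, α ≠ αs → α ≠ αb →
          ∑ i ∈ Finset.range t, (f.eval α * (α - αb)⁻¹) ^ ((p ^ m) ^ i) =
            ∑ i ∈ Finset.range t, (g.eval α * (α - αb)⁻¹) ^ ((p ^ m) ^ i)) →
        f.eval αs = g.eval αs ∧ f.eval αb = g.eval αb :=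
  depth_two_two_erasure_repair_general p m t k hp ht F hF hk αs αb hne
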